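/- A Kähler metric on a compact complex surface is Bach-flat if and only if it is extremal and satisfies s·r̊ + 2 Hess₀(s) = 0, where r̊ is the trace-free Ricci tensor and Hess₀(s) the trace-free Hessian of the scalar curvature. -/

import Mathlib

noncomputable section

open Matrix

/-- Abstract package of pointwise curvature data of a compact connected Kähler
surface `(M⁴, g, J)`, expressed in a local orthonormal frame: the scalar
curvature `s`, its gradient `∇s` and Hessian `∇∇s`, the trace-free Ricci
tensor `r̊`, and the complex structure `J`. -/
structure KahlerSurface where
  M : Type
  [topM : TopologicalSpace M]
  [cptM : CompactSpace M]
  [connM : ConnectedSpace M]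
  [neM : Nonempty M]
  /-- the scalar curvature `s` of the Kähler metric `g` -/
  s : M → ℝ
  s_cont : Continuous s
  /-- the components of the gradient `∇s` in an orthonormal frame -/
  grad_s : M → Fin 4 → ℝ
  /-- the components of the Hessian `∇∇s` in an orthonormal frame -/
  Hess_s : M → Matrix (Fin 4) (Fin 4) ℝ
  hess_symm : ∀ x, (Hess_s x)ᵀ = Hess_s x
  /-- the trace-free Ricci tensor `r̊` -/
  ricci0 : M → Matrix (Fin 4) (Fin 4) ℝ
  ricci0_symm : ∀ x, (ricci0 x)ᵀ = ricci0 x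
  ricci0_traceless : ∀ x, (ricci0 x).trace = 0
  /-- the complex structure `J` (an orthogonal almost complex structure) -/
  J : M → Matrix (Fin 4) (Fin 4) ℝ
  J_sq : ∀ x, J x * J x = -1
  J_orth : ∀ x, (J x)ᵀ * J x = 1
  /-- the Ricci tensor of a Kähler metric is `J`-invariant -/
  ricci0_Jinv : ∀ x, (J x)ᵀ * ricci0 x * J x = ricci0 x

attribute [instance] KahlerSurface.topM KahlerSurface.cptM KahlerSurface.connM
  KahlerSurface.neM

namespace KahlerSurface

variable (X : KahlerSurface)

/-- The geometer's (positive) Laplacian `Δs = -∇ᵃ∇ₐ s`. -/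
def lap (x : X.M) : ℝ := -(X.Hess_s x).trace

/-- `|∇s|²`. -/
def gradSq (x : X.M) : ℝ := ∑ i, (X.grad_s x i) ^ 2

/-- The trace-free Hessian `Hess₀(s)`. -/
def Hess0 (x : X.M) : Matrix (Fin 4) (Fin 4) ℝ :=
  X.Hess_s x - ((X.Hess_s x).trace / 4) • (1 : Matrix (Fin 4) (Fin 4) ℝ)

/-- The pullback `J*(A) = A(J·, J·)` of a symmetric 2-tensor. -/
def Jstar (x : X.M) (A : Matrix (Fin 4) (Fin 4) ℝ) : Matrix (Fin 4) (Fin 4) ℝ :=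
  (X.J x)ᵀ * A * X.J x

/-- The Kähler metric is extremal: `Hess(s)` is `J`-invariant, i.e. Calabi's
equation `∂̄∇^{1,0}s = 0` holds. -/
def Extremal : Prop := ∀ x, X.Jstar x (X.Hess_s x) = X.Hess_s x

/-- A Kähler surface is Bach-flat iff it is extremal and `s r̊ + 2 Hess₀(s) = 0`. -/
def BachFlat : Prop :=
  X.Extremal ∧ ∀ x, X.s x • X.ricci0 x + (2 : ℝ) • X.Hess0 x = 0

/-- The quantity `κ = -6 s Δs - 12 |∇s|² + s³`. -/
def kappa (x : X.M) : ℝ :=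
  -6 * X.s x * X.lap x - 12 * X.gradSq x + (X.s x) ^ 3

end KahlerSurface


/-- A compact connected Kähler surface together with its Bach tensor `B`.  The field
`bach_eq` records the decomposition of the Bach tensor of a Kähler surface into its
`J`-invariant and `J`-anti-invariant parts:
`B = (1/6)[s r̊ + 2 Hess₀^⊞(s)] + (1/12)[Hess(s) − J*Hess(s)]`,
where `Hess₀^⊞(s) = (1/2)(Hess₀(s) + J*Hess₀(s))` is the trace-free `J`-invariant
part of the Hessian of `s`. -/
structure KahlerSurfaceWithBach extends KahlerSurface where
  /-- the Bach tensor -/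
  bach : M → Matrix (Fin 4) (Fin 4) ℝ
  bach_eq : ∀ x, bach x =
    (1 / 6 : ℝ) • (s x • ricci0 x +
      ((Hess_s x - ((Hess_s x).trace / 4) • (1 : Matrix (Fin 4) (Fin 4) ℝ)) +
        (J x)ᵀ * (Hess_s x - ((Hess_s x).trace / 4) • (1 : Matrix (Fin 4) (Fin 4) ℝ)) *
          J x)) +
    (1 / 12 : ℝ) • (Hess_s x - (J x)ᵀ * Hess_s x * J x)

/-!
The Bach tensor is the sum of a `J`-invariant part `B⊞` and a `J`-anti-invariant part `B⊟`.
Since `A ↦ Jᵀ A J` is an involution, such a sum vanishes iff both parts do, because applying the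
involution to `B⊞ + B⊟ = 0` gives `B⊞ - B⊟ = 0`. Now `B⊟ = 0` is extremality, and once `Hess(s)`
is `J`-invariant so is `Hess₀(s)`, so that `B⊞ = (1/6)(s r̊ + 2 Hess₀(s))`.
-/

section Involution

variable {K V : Type*} [Field K] [NeZero (2 : K)] [AddCommGroup V] [Module K V]

theorem add_eq_zero_iff_of_map_eq_of_map_eq_neg (f : V →ₗ[K] V) {P Q : V} (hP : f P = P)
    (hQ : f Q = -Q) : P + Q = 0 ↔ P = 0 ∧ Q = 0 := by
  refine ⟨fun h => ?_, fun ⟨hP0, hQ0⟩ => by rw [hP0, hQ0, add_zero]⟩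
  have hdiff : P - Q = 0 := by rw [sub_eq_add_neg, ← hP, ← hQ, ← map_add, h, map_zero]
  have htwo : (2 : K) • P = 0 := by
    rw [two_smul]
    calc P + P = (P + Q) + (P - Q) := by abel
      _ = 0 := by rw [h, hdiff, add_zero]
  have hP0 : P = 0 := (smul_eq_zero.mp htwo).resolve_left two_ne_zero
  exact ⟨hP0, by rwa [hP0, zero_add] at h⟩

end Involution

namespace Matrix

variable {n K : Type*} [Fintype n] [Field K]

/-- The pullback `J*A = A(J·, J·)` of bilinear forms, as a linear map. -/
def jStar (J : Matrix n n K) : Matrix n n K →ₗ[K] Matrix n n K where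
  toFun A := Jᵀ * A * J
  map_add' A B := by rw [Matrix.mul_add, Matrix.add_mul]
  map_smul' c A := by rw [Matrix.mul_smul, Matrix.smul_mul]; rfl

variable {J : Matrix n n K}

@[simp]
theorem jStar_apply (A : Matrix n n K) : jStar J A = Jᵀ * A * J := rfl

theorem jStar_jStar [DecidableEq n] (hJ : J * J = -1) (A : Matrix n n K) :
    jStar J (jStar J A) = A := by
  have hJt : Jᵀ * Jᵀ = -1 := by rw [← transpose_mul, hJ, transpose_neg, transpose_one]
  calc jStar J (jStar J A) = (Jᵀ * Jᵀ) * A * (J * J) := by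
        simp only [jStar_apply, Matrix.mul_assoc]
    _ = A := by
        rw [hJt, hJ, Matrix.neg_mul, Matrix.mul_neg, Matrix.one_mul, Matrix.mul_one, neg_neg]

theorem jStar_smul_one [DecidableEq n] (hJ : Jᵀ * J = 1) (c : K) : jStar J (c • 1) = c • 1 := by
  rw [map_smul, jStar_apply, Matrix.mul_one, hJ]

theorem jStar_add_jStar [DecidableEq n] (hJ : J * J = -1) (A : Matrix n n K) :
    jStar J (A + jStar J A) = A + jStar J A := by
  rw [map_add, jStar_jStar hJ, add_comm]

theorem jStar_sub_jStar [DecidableEq n] (hJ : J * J = -1) (A : Matrix n n K) :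
    jStar J (A - jStar J A) = -(A - jStar J A) := by
  rw [map_sub, jStar_jStar hJ, neg_sub]

theorem jStar_sub_smul_one [DecidableEq n] (hJ : Jᵀ * J = 1) (A : Matrix n n K) (c : K) :
    jStar J (A - c • 1) = jStar J A - c • 1 := by
  rw [map_sub, jStar_smul_one hJ]

/-- The left-hand side is the Bach tensor in the form of `bach_eq`, with `c` in place of
`tr Hess(s) / 4`. -/
theorem invariant_add_antiInvariant_eq_zero_iff [DecidableEq n] [CharZero K] (hJ2 : J * J = -1)
    (hJO : Jᵀ * J = 1) {R : Matrix n n K} (hR : jStar J R = R) (s c : K) (A : Matrix n n K) :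
    (1 / 6 : K) • (s • R + ((A - c • 1) + jStar J (A - c • 1))) +
        (1 / 12 : K) • (A - jStar J A) = 0 ↔
      jStar J A = A ∧ s • R + (2 : K) • (A - c • 1) = 0 := by
  have hinv : jStar J ((1 / 6 : K) • (s • R + ((A - c • 1) + jStar J (A - c • 1)))) =
      (1 / 6 : K) • (s • R + ((A - c • 1) + jStar J (A - c • 1))) := by
    rw [map_smul, map_add, map_smul, hR, jStar_add_jStar hJ2]
  have hanti : jStar J ((1 / 12 : K) • (A - jStar J A)) = -((1 / 12 : K) • (A - jStar J A)) := by
    rw [map_smul, jStar_sub_jStar hJ2, smul_neg]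
  rw [add_eq_zero_iff_of_map_eq_of_map_eq_neg (jStar J) hinv hanti, and_comm,
    smul_eq_zero_iff_right (by norm_num), sub_eq_zero, eq_comm (a := A)]
  refine and_congr_right fun hA => ?_
  rw [smul_eq_zero_iff_right (by norm_num), jStar_sub_smul_one hJO, hA, ← two_smul K (A - c • 1)]

end Matrix

/-- A Kähler metric on a compact complex surface is Bach-flat if and
only if it is extremal and satisfies `s·r̊ + 2 Hess₀(s) = 0`. -/
theorem bach_flat_iff_extremal_and_rico (X : KahlerSurfaceWithBach) :
    (∀ x, X.bach x = 0) ↔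
      (X.toKahlerSurface.Extremal ∧
        ∀ x, X.s x • X.ricci0 x + (2 : ℝ) • X.toKahlerSurface.Hess0 x = 0) := by
  have pointwise (x : X.M) : X.bach x = 0 ↔
      X.toKahlerSurface.Jstar x (X.Hess_s x) = X.Hess_s x ∧
        X.s x • X.ricci0 x + (2 : ℝ) • X.toKahlerSurface.Hess0 x = 0 := by
    rw [X.bach_eq x]
    exact Matrix.invariant_add_antiInvariant_eq_zero_iff (X.J_sq x) (X.J_orth x)
      (X.ricci0_Jinv x) _ _ _
  simp only [pointwise, forall_and, KahlerSurface.Extremal]
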